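/- Let G be a hole-edge-disjoint simple graph, let C be a hole of G, let e = uv be an edge of C, and suppose S_{C,e} ≠ ∅. Then any shortest path among all C-avoiding (u,v)-paths of G has length exactly 2. -/

import Mathlib

open SimpleGraph

universe u

/-- A *hole* of a simple graph: an induced (chordless) cycle of length at least 4. -/
def IsHole {V : Type u} (G : SimpleGraph V) {v : V} (c : G.Walk v v) : Prop :=
  c.IsCycle ∧ 4 ≤ c.length ∧
    ∀ x ∈ c.support, ∀ y ∈ c.support, G.Adj x y → s(x, y) ∈ c.edges

/-- A graph is *chordal* if it has no hole. -/
def Chordal {V : Type u} (G : SimpleGraph V) : Prop :=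
  ∀ (v : V) (c : G.Walk v v), ¬ IsHole G c

/-- A graph is *hole-edge-disjoint* if any two of its holes either have the same edge set
or share no edge. -/
def HoleEdgeDisjoint {V : Type u} (G : SimpleGraph V) : Prop :=
  ∀ (u v : V) (c₁ : G.Walk u u) (c₂ : G.Walk v v), IsHole G c₁ → IsHole G c₂ →
    ({e | e ∈ c₁.edges} = {e | e ∈ c₂.edges} ∨ ∀ e ∈ c₁.edges, e ∉ c₂.edges)

/-- The complete tripartite graph `K_{2,2,2}`. -/
def K222 : SimpleGraph (Fin 3 × Fin 2) where
  Adj a b := a.1 ≠ b.1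
  symm := ⟨fun _ _ h => Ne.symm h⟩
  loopless := ⟨fun _ h => h rfl⟩

/-- A graph is `K_{2,2,2}`-free if it has no induced subgraph isomorphic to `K_{2,2,2}`. -/
def K222Free {V : Type u} (G : SimpleGraph V) : Prop :=
  ¬ ∃ f : Fin 3 × Fin 2 → V, Function.Injective f ∧
      ∀ a b, G.Adj (f a) (f b) ↔ K222.Adj a b

/-- `X_C`: the set of vertices adjacent to every vertex of the hole `C`. -/
def holeNbrs {V : Type u} (G : SimpleGraph V) {v : V} (c : G.Walk v v) : Set V :=
  {x | ∀ y ∈ c.support, G.Adj x y}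

/-- `V(C) ∪ X_C`. -/
def avoidSet {V : Type u} (G : SimpleGraph V) {v : V} (c : G.Walk v v) : Set V :=
  {x | x ∈ c.support} ∪ holeNbrs G c

/-- A `C`-avoiding path: a path none of whose internal vertices lie in `V(C) ∪ X_C`,
and, if it has length 1, at least one of its two vertices is not in `V(C) ∪ X_C`. -/
def IsCAvoidingPath {V : Type u} (G : SimpleGraph V) {v : V} (c : G.Walk v v)
    {a b : V} (W : G.Walk a b) : Prop :=
  W.IsPath ∧
    (∀ x ∈ W.support, x ≠ a → x ≠ b → x ∉ avoidSet G c) ∧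
    (W.length = 1 → a ∉ avoidSet G c ∨ b ∉ avoidSet G c)

/-- `S_{C,e}` for `e = ab`: all internal vertices of `C`-avoiding `(a,b)`-paths. -/
def Sset {V : Type u} (G : SimpleGraph V) {v : V} (c : G.Walk v v) (a b : V) : Set V :=
  {w | ∃ W : G.Walk a b, IsCAvoidingPath G c W ∧ w ∈ W.support ∧ w ≠ a ∧ w ≠ b}

/-- `T_{C,e}` for `e = ab`: all vertices `w` such that `a w b` is a `C`-avoiding path. -/
def Tset {V : Type u} (G : SimpleGraph V) {v : V} (c : G.Walk v v) (a b : V) : Set V :=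
  {w | ∃ (h₁ : G.Adj a w) (h₂ : G.Adj w b),
      IsCAvoidingPath G c (Walk.cons h₁ (Walk.cons h₂ Walk.nil))}

/-- `X_{C,e} = X_C ∪ {a, b}` for `e = ab`. -/
def Xce {V : Type u} (G : SimpleGraph V) {v : V} (c : G.Walk v v) (a b : V) : Set V :=
  holeNbrs G c ∪ {a, b}

/-- The number of connected components of a graph. -/
noncomputable def numComponents {V : Type u} (G : SimpleGraph V) : ℕ :=
  Nat.card G.ConnectedComponent

/-- `X` is a vertex cut of `G` if `G − X` has more connected components than `G`. -/
def IsVertexCut {V : Type u} (G : SimpleGraph V) (X : Set V) : Prop :=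
  numComponents G < numComponents (G.induce Xᶜ)

/-- A clique cut: a vertex cut which is a clique. -/
def IsCliqueCut {V : Type u} (G : SimpleGraph V) (X : Set V) : Prop :=
  G.IsClique X ∧ IsVertexCut G X

/-- `U` is a union of connected components of `G − X`. -/
def IsComponentUnion {V : Type u} (G : SimpleGraph V) (X U : Set V) : Prop :=
  U ⊆ Xᶜ ∧ ∀ a b : ↥(Xᶜ), (G.induce Xᶜ).Reachable a b → ((a : V) ∈ U ↔ (b : V) ∈ U)

/-- A chordal cut: a clique cut `X` such that there is a (nonempty) union `U` of
connected components of `G − X` with `G[U ∪ X]` chordal. -/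
def IsChordalCut {V : Type u} (G : SimpleGraph V) (X : Set V) : Prop :=
  IsCliqueCut G X ∧
    ∃ U : Set V, U.Nonempty ∧ IsComponentUnion G X U ∧ Chordal (G.induce (U ∪ X))

/-- `x` lies in `Q_{C,e}`, the connected component of `G − X_{C,e}` containing
`V(C) \ {a, b}` (for `e = ab`). -/
def InQ {V : Type u} (G : SimpleGraph V) {v : V} (c : G.Walk v v) (a b : V) (x : V) : Prop :=
  ∃ (hx : x ∈ (Xce G c a b)ᶜ) (y : V) (hy : y ∈ (Xce G c a b)ᶜ),
    y ∈ c.support ∧ y ≠ a ∧ y ≠ b ∧ (G.induce (Xce G c a b)ᶜ).Reachable ⟨x, hx⟩ ⟨y, hy⟩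

/-- The vertex set of `U_{C,e}`: the union of the connected components of
`G − X_{C,e}` other than `Q_{C,e}` containing a vertex of `T_{C,e}`. -/
def Uset {V : Type u} (G : SimpleGraph V) {v : V} (c : G.Walk v v) (a b : V) : Set V :=
  {x | ∃ hx : x ∈ (Xce G c a b)ᶜ, ¬ InQ G c a b x ∧
      ∃ (t : V) (ht : t ∈ (Xce G c a b)ᶜ), t ∈ Tset G c a b ∧ ¬ InQ G c a b t ∧
        (G.induce (Xce G c a b)ᶜ).Reachable ⟨x, hx⟩ ⟨t, ht⟩}

/-- `G` has the chordal property: there are a hole `C` and an edge `e` of `C` such that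
`G[V(U_{C,e}) ∪ X_{C,e}]` is chordal. -/
def HasChordalProperty {V : Type u} (G : SimpleGraph V) : Prop :=
  ∃ (v : V) (c : G.Walk v v) (a b : V), IsHole G c ∧ s(a, b) ∈ c.edges ∧
    Chordal (G.induce (Uset G c a b ∪ Xce G c a b))

/-- `h(G)`: the number of holes of `G`, counted by their edge sets. -/
noncomputable def holeCount {V : Type u} (G : SimpleGraph V) : ℕ :=
  Nat.card {s : Set (Sym2 V) // ∃ (v : V) (c : G.Walk v v), IsHole G c ∧ s = {e | e ∈ c.edges}}

/-- `G` together with `k` added isolated vertices. -/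
def addIsolated {V : Type u} (G : SimpleGraph V) (k : ℕ) : SimpleGraph (V ⊕ Fin k) where
  Adj a b := ∃ x y, G.Adj x y ∧ a = Sum.inl x ∧ b = Sum.inl y
  symm := by
    constructor
    rintro a b ⟨x, y, h, rfl, rfl⟩
    exact ⟨y, x, h.symm, rfl, rfl⟩
  loopless := by
    constructor
    rintro a ⟨x, y, h, rfl, hy⟩
    obtain rfl := Sum.inl.inj hy
    exact G.loopless.irrefl x h

/-- A digraph (given by its arc relation) is acyclic: it has no directed closed walk. -/
def IsAcyclicDigraph {α : Type u} (r : α → α → Prop) : Prop :=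
  ∀ x, ¬ Relation.TransGen r x x

/-- `H` is the competition graph of some acyclic digraph: distinct vertices are adjacent
iff they have a common out-neighbour (prey). -/
def IsCompetitionGraphOfAcyclicDigraph {α : Type u} (H : SimpleGraph α) : Prop :=
  ∃ r : α → α → Prop, IsAcyclicDigraph r ∧
    ∀ a b : α, H.Adj a b ↔ a ≠ b ∧ ∃ x, r a x ∧ r b x

/-- The competition number `k(G)`: the least `k` such that `G` together with `k` isolated
vertices is the competition graph of an acyclic digraph. -/
noncomputable def compNumber {V : Type u} (G : SimpleGraph V) : ℕ :=
  sInf {k | IsCompetitionGraphOfAcyclicDigraph (addIsolated G k)}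

/-!
A shortest `C`-avoiding `(a,b)`-path `P` has no chord other than possibly `ab`: any other chord
would shortcut `P` into a shorter `C`-avoiding path. Lengths `0` and `1` are impossible since `a ≠ b`
both lie on `C`. If `P` had length at least `3`, closing it with the edge `ba` would therefore give
a hole sharing the edge `ab` with `C`, so by hole-edge-disjointness both holes have the same edges.
Then the first edge of `P` lies on `C`, and so does its inner endpoint, which a `C`-avoiding path
forbids.
-/

namespace SimpleGraph.Walk

variable {V : Type u} {G : SimpleGraph V}

theorem support_append_cons_sublist {a x y b : V} (T : G.Walk a x) (D : G.Walk x y)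
    (D' : G.Walk y b) (hxy : G.Adj x y) :
    List.Sublist (T.append (cons hxy D')).support (T.append (D.append D')).support := by
  rw [support_append, support_append, tail_support_append, support_cons, List.tail_cons,
    ← cons_tail_support D']
  exact (List.singleton_sublist.mpr (D.end_mem_tail_support_of_ne hxy.ne)).append
    (List.Sublist.refl _) |>.append_left _

theorem IsPath.exists_shortcut_of_eq_append {a b x y : V} {P : G.Walk a b} (hP : P.IsPath)
    {T : G.Walk a x} {D : G.Walk x y} {D' : G.Walk y b} (hPeq : P = T.append (D.append D'))
    (hxy : G.Adj x y) (hxyP : s(x, y) ∉ P.edges) :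
    ∃ Q : G.Walk a b, Q.IsPath ∧ Q.support ⊆ P.support ∧ Q.length < P.length ∧
      (Q.length = 1 → s(x, y) = s(a, b)) := by
  subst hPeq
  have hsub := support_append_cons_sublist T D D' hxy
  have hD : 2 ≤ D.length := by
    by_contra! hD
    obtain rfl : D = hxy.toWalk := eq_of_length_le_one (by omega) (by simp)
    simp at hxyP
  refine ⟨T.append (cons hxy D'), isPath_def _ |>.mpr (hP.support_nodup.sublist hsub),
    hsub.subset, by simp only [length_append, length_cons]; omega, fun h1 => ?_⟩
  simp only [length_append, length_cons] at h1
  obtain rfl := eq_of_length_eq_zero (p := T) (by omega)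
  obtain rfl := eq_of_length_eq_zero (p := D') (by omega)
  rfl

theorem IsPath.exists_shortcut {a b x y : V} {P : G.Walk a b} (hP : P.IsPath)
    (hx : x ∈ P.support) (hy : y ∈ P.support) (hxy : G.Adj x y) (hxyP : s(x, y) ∉ P.edges) :
    ∃ Q : G.Walk a b, Q.IsPath ∧ Q.support ⊆ P.support ∧ Q.length < P.length ∧
      (Q.length = 1 → s(x, y) = s(a, b)) := by
  obtain ⟨T, D, rfl⟩ := Walk.mem_support_iff_exists_append.mp hx
  rcases (mem_support_append_iff T D).mp hy with hy | hy
  · obtain ⟨T₁, T₂, rfl⟩ := Walk.mem_support_iff_exists_append.mp hy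
    rw [Sym2.eq_swap] at hxyP ⊢
    exact hP.exists_shortcut_of_eq_append (append_assoc _ _ _).symm hxy.symm hxyP
  · obtain ⟨D₁, D₂, rfl⟩ := Walk.mem_support_iff_exists_append.mp hy
    exact hP.exists_shortcut_of_eq_append rfl hxy hxyP

end SimpleGraph.Walk

section Holes

variable {V : Type u} {G : SimpleGraph V}

theorem isHole_cons_of_adj_mem_edges {a b : V} {P : G.Walk a b} (hba : G.Adj b a)
    (hP : P.IsPath) (hlen : 3 ≤ P.length)
    (hchord : ∀ x ∈ P.support, ∀ y ∈ P.support, G.Adj x y → s(x, y) ≠ s(a, b) →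
      s(x, y) ∈ P.edges) :
    IsHole G (Walk.cons hba P) := by
  refine ⟨(Walk.cons_isCycle_iff P hba).mpr ⟨hP, fun h => ?_⟩,
    by rw [Walk.length_cons]; omega, ?_⟩
  · have := hP.length_eq_one_of_mem_edges (Sym2.eq_swap ▸ h)
    omega
  · intro x hx y hy hxy
    rw [Walk.support_cons, List.mem_cons, or_iff_right_of_imp (· ▸ P.end_mem_support)] at hx hy
    rw [Walk.edges_cons, List.mem_cons, Sym2.eq_swap (a := b)]
    by_cases hab : s(x, y) = s(a, b)
    · exact .inl hab
    · exact .inr (hchord x hx y hy hxy hab)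

end Holes

namespace IsCAvoidingPath

variable {V : Type u} {G : SimpleGraph V} {v : V} {c : G.Walk v v} {a b : V}

theorem mono {P Q : G.Walk a b} (hP : IsCAvoidingPath G c P) (hQ : Q.IsPath)
    (hsub : Q.support ⊆ P.support) (hlen : Q.length ≠ 1) : IsCAvoidingPath G c Q :=
  ⟨hQ, fun x hx => hP.2.1 x (hsub hx), fun h => absurd h hlen⟩

theorem two_le_length {P : G.Walk a b} (hP : IsCAvoidingPath G c P) (hab : s(a, b) ∈ c.edges) :
    2 ≤ P.length := by
  have hne : a ≠ b := (c.adj_of_mem_edges hab).ne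
  have h0 : P.length ≠ 0 := fun h => hne (Walk.eq_of_length_eq_zero h)
  have h1 : P.length ≠ 1 := fun h => by
    rcases hP.2.2 h with h | h
    · exact h (.inl (c.fst_mem_support_of_mem_edges hab))
    · exact h (.inl (c.snd_mem_support_of_mem_edges hab))
  omega

theorem snd_notMem_support {P : G.Walk a b} (hP : IsCAvoidingPath G c P) (hlen : 2 ≤ P.length) :
    P.snd ∉ c.support := by
  have hnil : ¬ P.Nil := by rw [Walk.not_nil_iff_lt_length]; omega
  have hb : P.snd ≠ b := fun h => by
    have hmem := P.mk_start_snd_mem_edges hnil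
    rw [h] at hmem
    have := hP.1.length_eq_one_of_mem_edges hmem
    omega
  exact fun hc => hP.2.1 _ (List.mem_of_mem_tail (P.snd_mem_tail_support hnil))
    (P.adj_snd hnil).ne' hb (.inl hc)

theorem mem_edges_of_adj_of_minimal {P : G.Walk a b} (hP : IsCAvoidingPath G c P)
    (hmin : ∀ Q : G.Walk a b, IsCAvoidingPath G c Q → P.length ≤ Q.length)
    {x y : V} (hx : x ∈ P.support) (hy : y ∈ P.support) (hxy : G.Adj x y)
    (hne : s(x, y) ≠ s(a, b)) : s(x, y) ∈ P.edges := by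
  by_contra hxyP
  obtain ⟨Q, hQ, hsub, hlt, h1⟩ := hP.1.exists_shortcut hx hy hxy hxyP
  exact (hmin Q (hP.mono hQ hsub fun h => hne (h1 h))).not_gt hlt

end IsCAvoidingPath

theorem shortest_C_avoiding_path_length_eq_two_general
    {V : Type u} (G : SimpleGraph V) (hhed : HoleEdgeDisjoint G)
    {v : V} (c : G.Walk v v) (hc : IsHole G c)
    {a b : V} (he : s(a, b) ∈ c.edges)
    (P : G.Walk a b) (hP : IsCAvoidingPath G c P)
    (hmin : ∀ Q : G.Walk a b, IsCAvoidingPath G c Q → P.length ≤ Q.length) :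
    P.length = 2 := by
  have h2 := hP.two_le_length he
  by_contra hne
  have hnil : ¬ P.Nil := by rw [Walk.not_nil_iff_lt_length]; omega
  have hhole : IsHole G (Walk.cons (c.adj_of_mem_edges he).symm P) :=
    isHole_cons_of_adj_mem_edges _ hP.1 (by omega) fun x hx y hy hxy =>
      hP.mem_edges_of_adj_of_minimal hmin hx hy hxy
  have hsnd : s(a, P.snd) ∈ c.edges := by
    rcases hhed _ _ c _ hc hhole with heq | hdisj
    · exact (Set.ext_iff.mp heq _).mpr (List.mem_cons_of_mem _ (P.mk_start_snd_mem_edges hnil))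
    · exact absurd (by simp [Sym2.eq_swap]) (hdisj _ he)
  exact hP.snd_notMem_support h2 (c.snd_mem_support_of_mem_edges hsnd)

/-- In a hole-edge-disjoint graph, if `S_{C,e} ≠ ∅`, then any shortest
`C`-avoiding `(u,v)`-path has length exactly `2`. -/
theorem shortest_C_avoiding_path_length_eq_two
    {V : Type u} (G : SimpleGraph V) (hhed : HoleEdgeDisjoint G)
    {v : V} (c : G.Walk v v) (hc : IsHole G c)
    {a b : V} (he : s(a, b) ∈ c.edges) (hS : (Sset G c a b).Nonempty)
    (P : G.Walk a b) (hP : IsCAvoidingPath G c P)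
    (hmin : ∀ Q : G.Walk a b, IsCAvoidingPath G c Q → P.length ≤ Q.length) :
    P.length = 2 :=
  shortest_C_avoiding_path_length_eq_two_general G hhed c hc he P hP hmin
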